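/- Let d ≥ 1, τ < T, and let f₁, f₂ : [τ,T] × ℝ^d → ℝ^d be jointly continuous. Suppose that for j = 1, 2 there are exponents p_i^j ≥ 2 (i = 1,…,d) and constants α^j, C₁^j, C₂^j > 0 such that for all t ∈ [τ,T] and all u ∈ ℝ₊^d: ∑_{i=1}^d |f_j^i(t,u)|^{p_i^j/(p_i^j−1)} ≤ C₁^j (1 + ∑_{i=1}^d |u^i|^{p_i^j}) and (f_j(t,u), u) ≥ α^j ∑_{i=1}^d |u^i|^{p_i^j} − C₂^j. If moreover f₁^i(t,u) ≥ f₂^i(t,u) for all t ∈ [τ,T], all u ∈ ℝ₊^d and all i, then p_i^1 ≥ p_i^2 for every i = 1,…,d. -/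

import Mathlib

/-!
Test the hypotheses at time `τ` along the ray `u = s eᵢ`, `s ≥ 1`. Dissipativity of `f₂`, the
comparison `f₂ⁱ ≤ f₁ⁱ` and the growth bound of `f₁` (which makes `|f₁ⁱ| ≲ s^(p₁ⁱ - 1)`) give
`α₂ s^(p₂ⁱ) - C₂₂ ≤ f₂ⁱ s ≤ f₁ⁱ s ≲ s^(p₁ⁱ)`, which cannot hold for large `s` if `p₁ⁱ < p₂ⁱ`.
-/

open Filter Real

theorem exponent_le_of_eventually_rpow_le {α C K P Q : ℝ} (hα : 0 < α) (hC : 0 ≤ C)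
    (hP : 0 ≤ P) (h : ∀ᶠ s in atTop, α * s ^ Q - C ≤ K * s ^ P) : Q ≤ P := by
  by_contra! hPQ
  have hlarge := (tendsto_rpow_atTop (sub_pos.2 hPQ)).eventually_gt_atTop ((K + C) / α)
  obtain ⟨s, hs, hsQP, hs1⟩ := (h.and (hlarge.and (eventually_ge_atTop 1))).exists
  have hsP : 1 ≤ s ^ P := one_le_rpow hs1 hP
  have hsplit : s ^ Q = s ^ (Q - P) * s ^ P := by
    rw [← rpow_add (by linarith)]
    ring_nf
  have hK : K + C < α * s ^ (Q - P) := by rwa [div_lt_iff₀' hα] at hsQP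
  nlinarith

theorem abs_mul_le_of_abs_rpow_conj_le {x s c P : ℝ} (hP : 1 < P) (hs : 1 ≤ s)
    (hx : |x| ^ (P / (P - 1)) ≤ c * (1 + s ^ P)) :
    |x| * s ≤ (2 * c) ^ ((P - 1) / P) * s ^ P := by
  have hs0 : 0 ≤ s := by linarith
  have hsP : 1 ≤ s ^ P := one_le_rpow hs (by linarith)
  have hc : 0 ≤ c :=
    nonneg_of_mul_nonneg_left ((rpow_nonneg (abs_nonneg x) _).trans hx) (by linarith)
  have hx' : |x| ^ (P / (P - 1)) ≤ 2 * c * s ^ P := hx.trans (by nlinarith)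
  have hxs : |x| ≤ (2 * c) ^ ((P - 1) / P) * s ^ (P - 1) :=
    calc |x| = (|x| ^ (P / (P - 1))) ^ ((P - 1) / P) := by
          rw [← rpow_mul (abs_nonneg x), div_mul_div_comm, mul_comm P, div_self (by positivity),
            rpow_one]
      _ ≤ (2 * c * s ^ P) ^ ((P - 1) / P) :=
          rpow_le_rpow (by positivity) hx' (div_nonneg (by linarith) (by linarith))
      _ = (2 * c) ^ ((P - 1) / P) * s ^ (P - 1) := by
          rw [mul_rpow (by positivity) (by positivity), ← rpow_mul hs0,
            mul_div_cancel₀ _ (by linarith : P ≠ 0)]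
  calc |x| * s ≤ (2 * c) ^ ((P - 1) / P) * s ^ (P - 1) * s :=
        mul_le_mul_of_nonneg_right hxs hs0
    _ = (2 * c) ^ ((P - 1) / P) * s ^ P := by
        rw [rpow_sub_one (by linarith) P, mul_assoc, div_mul_cancel₀ _ (by linarith)]

section Single

variable {ι : Type*} [Fintype ι] [DecidableEq ι] (i : ι) (s : ℝ)

theorem EuclideanSpace.sum_abs_single_rpow {p : ι → ℝ} (hp : ∀ j, p j ≠ 0) :
    ∑ j, |EuclideanSpace.single i s j| ^ p j = |s| ^ p i := by
  rw [Finset.sum_eq_single i (fun j _ hj => by simp [hj, hp j]) (by simp)]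
  simp

theorem EuclideanSpace.sum_mul_single (g : ι → ℝ) :
    ∑ j, g j * EuclideanSpace.single i s j = g i * s := by
  simp

end Single

theorem exponents_ge_of_comparison_positive_general
    (d : ℕ) (τ T : ℝ) (hτT : τ < T)
    (f₁ f₂ : ℝ → EuclideanSpace ℝ (Fin d) → EuclideanSpace ℝ (Fin d))
    (p₁ p₂ : Fin d → ℝ) (hp₁ : ∀ i, 2 ≤ p₁ i) (hp₂ : ∀ i, 2 ≤ p₂ i)
    (C₁₁ α₂ C₂₂ : ℝ)
    (hα₂ : 0 < α₂) (hC₂₂ : 0 < C₂₂)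
    (hgrowth₁ : ∀ t ∈ Set.Icc τ T, ∀ u : EuclideanSpace ℝ (Fin d), (∀ i, 0 ≤ u i) →
      ∑ i, |f₁ t u i| ^ (p₁ i / (p₁ i - 1)) ≤ C₁₁ * (1 + ∑ i, |u i| ^ (p₁ i)))
    (hdiss₂ : ∀ t ∈ Set.Icc τ T, ∀ u : EuclideanSpace ℝ (Fin d), (∀ i, 0 ≤ u i) →
      α₂ * (∑ i, |u i| ^ (p₂ i)) - C₂₂ ≤ ∑ i, f₂ t u i * u i)
    (hcomp : ∀ t ∈ Set.Icc τ T, ∀ u : EuclideanSpace ℝ (Fin d), (∀ i, 0 ≤ u i) →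
      ∀ i, f₂ t u i ≤ f₁ t u i) :
    ∀ i, p₂ i ≤ p₁ i := by
  intro i
  have hτ : τ ∈ Set.Icc τ T := Set.left_mem_Icc.2 hτT.le
  refine exponent_le_of_eventually_rpow_le (K := (2 * C₁₁) ^ ((p₁ i - 1) / p₁ i)) hα₂ hC₂₂.le
    (by linarith [hp₁ i]) ?_
  filter_upwards [eventually_ge_atTop 1] with s hs
  set u := EuclideanSpace.single i s
  have hu : ∀ j, 0 ≤ u j := fun j => by
    simp only [u, PiLp.single_apply]
    split_ifs <;> linarith
  have hsum (p : Fin d → ℝ) (hp : ∀ j, 2 ≤ p j) : ∑ j, |u j| ^ p j = s ^ p i := by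
    rw [EuclideanSpace.sum_abs_single_rpow i s (fun j => by linarith [hp j]),
      abs_of_nonneg (by linarith)]
  have hinner (g : Fin d → ℝ) : ∑ j, g j * u j = g i * s := EuclideanSpace.sum_mul_single i s g
  have hgrowth : |f₁ τ u i| ^ (p₁ i / (p₁ i - 1)) ≤ C₁₁ * (1 + s ^ p₁ i) := by
    refine le_trans ?_ ((hgrowth₁ τ hτ u hu).trans_eq (by rw [hsum p₁ hp₁]))
    exact Finset.single_le_sum (f := fun j => |f₁ τ u j| ^ (p₁ j / (p₁ j - 1)))
      (fun j _ => rpow_nonneg (abs_nonneg _) _) (Finset.mem_univ i)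
  calc α₂ * s ^ p₂ i - C₂₂ ≤ f₂ τ u i * s := by
        simpa only [hsum p₂ hp₂, hinner] using hdiss₂ τ hτ u hu
    _ ≤ |f₁ τ u i| * s :=
        mul_le_mul_of_nonneg_right ((hcomp τ hτ u hu i).trans (le_abs_self _)) (by linarith)
    _ ≤ _ := abs_mul_le_of_abs_rpow_conj_le (by linarith [hp₁ i]) hs hgrowth

/-- If `f₁, f₂ : [τ,T] × ℝ^d → ℝ^d` are jointly continuous, each satisfying
the growth and dissipativity conditions on the positive cone `ℝ₊^d` with exponents
`p₁ i, p₂ i ≥ 2` and positive constants, and `f₁^i(t,u) ≥ f₂^i(t,u)` on `ℝ₊^d`,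
then `p₁ i ≥ p₂ i` for all `i`. -/
theorem exponents_ge_of_comparison_positive
    (d : ℕ) (hd : 1 ≤ d) (τ T : ℝ) (hτT : τ < T)
    (f₁ f₂ : ℝ → EuclideanSpace ℝ (Fin d) → EuclideanSpace ℝ (Fin d))
    (hf₁cont : ContinuousOn (Function.uncurry f₁) (Set.Icc τ T ×ˢ Set.univ))
    (hf₂cont : ContinuousOn (Function.uncurry f₂) (Set.Icc τ T ×ˢ Set.univ))
    (p₁ p₂ : Fin d → ℝ) (hp₁ : ∀ i, 2 ≤ p₁ i) (hp₂ : ∀ i, 2 ≤ p₂ i)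
    (α₁ C₁₁ C₂₁ α₂ C₁₂ C₂₂ : ℝ)
    (hα₁ : 0 < α₁) (hC₁₁ : 0 < C₁₁) (hC₂₁ : 0 < C₂₁)
    (hα₂ : 0 < α₂) (hC₁₂ : 0 < C₁₂) (hC₂₂ : 0 < C₂₂)
    (hgrowth₁ : ∀ t ∈ Set.Icc τ T, ∀ u : EuclideanSpace ℝ (Fin d), (∀ i, 0 ≤ u i) →
      ∑ i, |f₁ t u i| ^ (p₁ i / (p₁ i - 1)) ≤ C₁₁ * (1 + ∑ i, |u i| ^ (p₁ i)))
    (hgrowth₂ : ∀ t ∈ Set.Icc τ T, ∀ u : EuclideanSpace ℝ (Fin d), (∀ i, 0 ≤ u i) →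
      ∑ i, |f₂ t u i| ^ (p₂ i / (p₂ i - 1)) ≤ C₁₂ * (1 + ∑ i, |u i| ^ (p₂ i)))
    (hdiss₁ : ∀ t ∈ Set.Icc τ T, ∀ u : EuclideanSpace ℝ (Fin d), (∀ i, 0 ≤ u i) →
      α₁ * (∑ i, |u i| ^ (p₁ i)) - C₂₁ ≤ ∑ i, f₁ t u i * u i)
    (hdiss₂ : ∀ t ∈ Set.Icc τ T, ∀ u : EuclideanSpace ℝ (Fin d), (∀ i, 0 ≤ u i) →
      α₂ * (∑ i, |u i| ^ (p₂ i)) - C₂₂ ≤ ∑ i, f₂ t u i * u i)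
    (hcomp : ∀ t ∈ Set.Icc τ T, ∀ u : EuclideanSpace ℝ (Fin d), (∀ i, 0 ≤ u i) →
      ∀ i, f₂ t u i ≤ f₁ t u i) :
    ∀ i, p₂ i ≤ p₁ i :=
  exponents_ge_of_comparison_positive_general d τ T hτT f₁ f₂ p₁ p₂ hp₁ hp₂ C₁₁ α₂ C₂₂ hα₂ hC₂₂
    hgrowth₁ hdiss₂ hcomp
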